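/- arXiv:2510.22714 — 4 statements merged into one kernel-verified Lean document; each statement's English description precedes it below -/
import Mathlib

section
/- Let X be a real random variable with finite third moment and mean μ = E[X], and let X_1, X_2, X_3 be three i.i.d. copies of X. Then E[(X - μ)^3] = E[(X_1 - X_3)(X_1 - X_2)^2] = (1/2) E[(X_1 - X_2)((X_1 - X_3)^2 - (X_2 - X_3)^2)] = (1/2) E[(X_1 - X_2)^2((X_1 - X_3) + (X_2 - X_3))] = (1/6) E[D_1 D_2 D_3], where D_i := ∑_{j ≠ i} (X_i - X_j) for i = 1, 2, 3. -/
/-!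
All four integrands are products of three linear forms `∑ i, u i * Y i` whose coefficients sum
to zero, so nothing changes when each `Y i` is replaced by its centring `W i = Y i - E[X]`.
Expanding the product, `E[W i * W j * W k]` vanishes unless `i = j = k`: an index occurring only
once gives a mean-zero factor independent of the other two. Hence
`E[(∑ u W) (∑ v W) (∑ w W)] = E[(X - E[X])³] * ∑ i, u i * v i * w i`, and the four coefficient
sums are `1`, `2`, `2` and `6`.
-/

open MeasureTheory ProbabilityTheory Finset

section

variable {Ω ι : Type*} {mΩ : MeasurableSpace Ω} {μ : Measure Ω}

theorem MeasureTheory.MemLp.integrable_mul_mul {𝕜 : Type*} [NormedRing 𝕜] {f g h : Ω → 𝕜}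
    (hf : MemLp f 3 μ) (hg : MemLp g 3 μ) (hh : MemLp h 3 μ) :
    Integrable (fun ω ↦ f ω * g ω * h ω) μ := by
  have := ENNReal.HolderTriple.of 3 3
  have : ENNReal.HolderTriple (3⁻¹ + 3⁻¹)⁻¹ 3 1 :=
    ⟨by rw [inv_inv, inv_one, ENNReal.inv_three_add_inv_three]⟩
  exact (hg.mul' hf (r := (3⁻¹ + 3⁻¹)⁻¹)).integrable_mul hh

theorem Finset.sum_mul_sum_mul_sum {R : Type*} [CommSemiring R] [Fintype ι] (u v w x : ι → R) :
    (∑ i, u i * x i) * (∑ i, v i * x i) * (∑ i, w i * x i)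
      = ∑ i, ∑ j, ∑ k, u i * v j * w k * (x i * x j * x k) := by
  rw [Finset.sum_mul_sum]
  simp_rw [Finset.sum_mul, Finset.mul_sum]
  exact sum_congr rfl fun i _ ↦ sum_congr rfl fun j _ ↦ sum_congr rfl fun k _ ↦ by ring

namespace ProbabilityTheory.iIndepFun

variable {W : ι → Ω → ℝ}

theorem integral_mul_mul_eq_zero (hW : iIndepFun W μ) (hmeas : ∀ i, AEMeasurable (W i) μ)
    {i j k : ι} (hji : j ≠ i) (hki : k ≠ i) (hi : ∫ ω, W i ω ∂μ = 0) :
    ∫ ω, W j ω * W k ω * W i ω ∂μ = 0 := by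
  have := (hW.indepFun_mul_left₀ hmeas j k i hji hki).integral_mul_eq_mul_integral
    ((hmeas j).mul (hmeas k)).aestronglyMeasurable (hmeas i).aestronglyMeasurable
  simpa [hi] using this

theorem integral_mul_mul_eq_ite [DecidableEq ι] (hW : iIndepFun W μ)
    (hmeas : ∀ i, AEMeasurable (W i) μ) (hcen : ∀ i, ∫ ω, W i ω ∂μ = 0) {κ : ℝ}
    (hκ : ∀ i, ∫ ω, W i ω ^ 3 ∂μ = κ) (i j k : ι) :
    ∫ ω, W i ω * W j ω * W k ω ∂μ = if j = i ∧ k = i then κ else 0 := by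
  by_cases hj : j = i <;> by_cases hk : k = i
  · subst j k
    simpa [pow_three, mul_assoc] using hκ i
  · subst j
    simpa [hk] using hW.integral_mul_mul_eq_zero hmeas (Ne.symm hk) (Ne.symm hk) (hcen k)
  · subst k
    simp only [hj, false_and, if_false]
    simp_rw [mul_right_comm (W i _)]
    exact hW.integral_mul_mul_eq_zero hmeas (Ne.symm hj) (Ne.symm hj) (hcen j)
  · simp only [hj, false_and, if_false]
    simp_rw [mul_rotate (W i _)]
    exact hW.integral_mul_mul_eq_zero hmeas hj hk (hcen i)

theorem integral_sum_mul_sum_mul_sum [Fintype ι] (hW : iIndepFun W μ)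
    (hL3 : ∀ i, MemLp (W i) 3 μ) (hcen : ∀ i, ∫ ω, W i ω ∂μ = 0) {κ : ℝ}
    (hκ : ∀ i, ∫ ω, W i ω ^ 3 ∂μ = κ) (u v w : ι → ℝ) :
    ∫ ω, (∑ i, u i * W i ω) * (∑ i, v i * W i ω) * (∑ i, w i * W i ω) ∂μ
      = κ * ∑ i, u i * v i * w i := by
  classical
  have hmeas i : AEMeasurable (W i) μ := (hL3 i).aestronglyMeasurable.aemeasurable
  have hint i j k : Integrable (fun ω ↦ u i * v j * w k * (W i ω * W j ω * W k ω)) μ :=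
    ((hL3 i).integrable_mul_mul (hL3 j) (hL3 k)).const_mul _
  simp_rw [Finset.sum_mul_sum_mul_sum]
  rw [integral_finsetSum _ fun i _ ↦ integrable_finsetSum _ fun j _ ↦
    integrable_finsetSum _ fun k _ ↦ hint i j k]
  simp_rw [integral_finsetSum _ fun j _ ↦ integrable_finsetSum _ fun k _ ↦ hint _ j k,
    integral_finsetSum _ fun k _ ↦ hint _ _ k, integral_const_mul,
    hW.integral_mul_mul_eq_ite hmeas hcen hκ]
  simp [ite_and, Finset.mul_sum, mul_comm]

end ProbabilityTheory.iIndepFun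

theorem ProbabilityTheory.integral_sum_mul_sum_mul_sum_of_identDistrib [Fintype ι]
    [IsProbabilityMeasure μ] {X : Ω → ℝ} {Y : ι → Ω → ℝ} (hX : MemLp X 3 μ)
    (hindep : iIndepFun Y μ) (hid : ∀ i, IdentDistrib (Y i) X μ μ) {u v w : ι → ℝ}
    (hu : ∑ i, u i = 0) (hv : ∑ i, v i = 0) (hw : ∑ i, w i = 0) :
    ∫ ω, (∑ i, u i * Y i ω) * (∑ i, v i * Y i ω) * (∑ i, w i * Y i ω) ∂μ
      = (∫ ω, (X ω - ∫ a, X a ∂μ) ^ 3 ∂μ) * ∑ i, u i * v i * w i := by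
  set m := ∫ a, X a ∂μ
  set W : ι → Ω → ℝ := fun i ω ↦ Y i ω - m
  have hW : iIndepFun W μ := hindep.comp (fun _ x ↦ x - m) fun _ ↦ measurable_sub_const m
  have hL3 i : MemLp (W i) 3 μ := ((hid i).symm.memLp_snd hX).sub (memLp_const m)
  have hcen i : ∫ ω, W i ω ∂μ = 0 := by
    rw [integral_sub (((hid i).symm.memLp_snd hX).integrable (by norm_num)) (integrable_const m),
      (hid i).integral_eq]
    simp [m]
  have hκ i : ∫ ω, W i ω ^ 3 ∂μ = ∫ ω, (X ω - m) ^ 3 ∂μ :=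
    ((hid i).comp ((measurable_sub_const m).pow_const 3)).integral_eq
  have hcentre (c : ι → ℝ) (hc : ∑ i, c i = 0) ω : ∑ i, c i * Y i ω = ∑ i, c i * W i ω := by
    simp [W, mul_sub, Finset.sum_sub_distrib, ← Finset.sum_mul, hc]
  simp_rw [hcentre u hu, hcentre v hv, hcentre w hw]
  exact hW.integral_sum_mul_sum_mul_sum hL3 hcen hκ u v w

end

theorem third_central_moment_D_representations
    {Ω : Type*} {mΩ : MeasurableSpace Ω} {μ : Measure Ω} [IsProbabilityMeasure μ]
    (X : Ω → ℝ) (Y : Fin 3 → Ω → ℝ) (μX : ℝ) (D : Fin 3 → Ω → ℝ)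
    (hX : MemLp X 3 μ)
    (hμX : μX = ∫ a, X a ∂μ)
    (hindep : iIndepFun Y μ)
    (hid : ∀ i, IdentDistrib (Y i) X μ μ)
    (hD : ∀ i ω, D i ω = ∑ j ∈ Finset.univ.erase i, (Y i ω - Y j ω)) :
    (∫ ω, (X ω - μX) ^ 3 ∂μ = ∫ ω, (Y 0 ω - Y 2 ω) * (Y 0 ω - Y 1 ω) ^ 2 ∂μ)
    ∧ (∫ ω, (X ω - μX) ^ 3 ∂μ
        = (1 / 2) * ∫ ω, (Y 0 ω - Y 1 ω) * ((Y 0 ω - Y 2 ω) ^ 2 - (Y 1 ω - Y 2 ω) ^ 2) ∂μ)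
    ∧ (∫ ω, (X ω - μX) ^ 3 ∂μ
        = (1 / 2) * ∫ ω, (Y 0 ω - Y 1 ω) ^ 2 * ((Y 0 ω - Y 2 ω) + (Y 1 ω - Y 2 ω)) ∂μ)
    ∧ (∫ ω, (X ω - μX) ^ 3 ∂μ = (1 / 6) * ∫ ω, D 0 ω * D 1 ω * D 2 ω ∂μ) := by
  subst hμX
  set κ := ∫ ω, (X ω - ∫ a, X a ∂μ) ^ 3 ∂μ
  set L : (Fin 3 → ℝ) → Ω → ℝ := fun u ω ↦ ∑ i, u i * Y i ω
  have key (u v w : Fin 3 → ℝ) (hu : ∑ i, u i = 0) (hv : ∑ i, v i = 0) (hw : ∑ i, w i = 0) :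
      ∫ ω, L u ω * L v ω * L w ω ∂μ = κ * ∑ i, u i * v i * w i :=
    integral_sum_mul_sum_mul_sum_of_identDistrib hX hindep hid hu hv hw
  have hD' i ω : D i ω = ∑ j, (Y i ω - Y j ω) := by rw [hD, Finset.sum_erase _ (sub_self _)]
  refine ⟨?_, ?_, ?_, ?_⟩
  · conv_rhs => rw [integral_congr_ae (g := fun ω ↦ L ![1, 0, -1] ω * L ![1, -1, 0] ω *
      L ![1, -1, 0] ω) (ae_of_all _ fun ω ↦ by simp [L, Fin.sum_univ_succ]; ring)]
    rw [key] <;> norm_num [Fin.sum_univ_succ]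
  · conv_rhs => rw [integral_congr_ae (g := fun ω ↦ L ![1, -1, 0] ω * L ![1, -1, 0] ω *
      L ![1, 1, -2] ω) (ae_of_all _ fun ω ↦ by simp [L, Fin.sum_univ_succ]; ring)]
    rw [key] <;> norm_num [Fin.sum_univ_succ]
    ring
  · conv_rhs => rw [integral_congr_ae (g := fun ω ↦ L ![1, -1, 0] ω * L ![1, -1, 0] ω *
      L ![1, 1, -2] ω) (ae_of_all _ fun ω ↦ by simp [L, Fin.sum_univ_succ]; ring)]
    rw [key] <;> norm_num [Fin.sum_univ_succ]
    ring
  · conv_rhs => rw [integral_congr_ae (g := fun ω ↦ L ![2, -1, -1] ω * L ![-1, 2, -1] ω *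
      L ![-1, -1, 2] ω) (ae_of_all _ fun ω ↦ by simp [L, hD', Fin.sum_univ_succ]; ring)]
    rw [key] <;> norm_num [Fin.sum_univ_succ]
    ring
end

section
/- Let X be a real random variable with finite moments up to order n ≥ 1 and mean μ = E[X], and let X_0, X_1, ..., X_n be i.i.d. copies of X. Then for every k with 1 ≤ k ≤ n, E[∏_{i=1}^k (X_0 - X_i)] = E[(X - μ)^k], i.e., the product of pairwise differences P_k := ∏_{i=1}^k (X_0 - X_i) is an unbiased estimator of the k-th central moment μ_k. -/
open MeasureTheory ProbabilityTheory Finset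
open Fin.NatCast

/-!
Condition on `X₀`: given `X₀ = t`, the factors `t - Xᵢ` are independent with mean `t - μ`, so the
product has conditional expectation `(t - μ)ᵏ`. Concretely, independence makes the joint law of
`(X₀, …, Xₖ)` the `(k+1)`-fold product of the law of `X`, and Fubini integrates out `X₁, …, Xₖ`
first. The
product of `k` factors in `Lᵏ` is integrable by Hölder, which is what licenses Fubini.
-/

theorem integrable_prod_of_memLp_card {α ι 𝕜 : Type*} [Fintype ι] [Nonempty ι]
    [NormedCommRing 𝕜] {mα : MeasurableSpace α} {μ : Measure α} {f : ι → α → 𝕜}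
    (hf : ∀ i, MemLp (f i) (Fintype.card ι) μ) :
    Integrable (fun x ↦ ∏ i, f i x) μ := by
  have hcard : (Fintype.card ι : ENNReal) ≠ 0 := by simp
  rw [← memLp_one_iff_integrable]
  convert MemLp.prod' (s := univ) fun i _ ↦ hf i
  simp [ENNReal.mul_inv_cancel hcard (ENNReal.natCast_ne_top _)]

theorem integral_pi_prod_sub_succ (ν : Measure ℝ) [IsProbabilityMeasure ν] {k : ℕ} (hk : 1 ≤ k)
    (hν : MemLp id k ν) :
    ∫ x, ∏ i : Fin k, (x 0 - x i.succ) ∂Measure.pi (fun _ : Fin (k + 1) ↦ ν)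
      = ∫ t, (t - ∫ s, s ∂ν) ^ k ∂ν := by
  have : Nonempty (Fin k) := ⟨⟨0, hk⟩⟩
  have hν₁ : Integrable (fun s ↦ s) ν := hν.integrable (by exact_mod_cast hk)
  have hcoord (j : Fin (k + 1)) :
      MemLp (fun x : Fin (k + 1) → ℝ ↦ x j) k (Measure.pi fun _ ↦ ν) :=
    hν.comp_measurePreserving (measurePreserving_eval _ j)
  have hint : Integrable (fun x : Fin (k + 1) → ℝ ↦ ∏ i : Fin k, (x 0 - x i.succ))
      (Measure.pi fun _ ↦ ν) :=
    integrable_prod_of_memLp_card fun i ↦ by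
      rw [Fintype.card_fin]
      exact (hcoord 0).sub (hcoord i.succ)
  have split := (measurePreserving_piFinSuccAbove (fun _ : Fin (k + 1) ↦ ν) 0).symm
  have hint' := (split.integrable_comp_emb (MeasurableEquiv.measurableEmbedding _)).2 hint
  rw [← split.integral_comp']
  simp only [Function.comp_def, MeasurableEquiv.piFinSuccAbove_symm_apply, Fin.insertNthEquiv,
    Equiv.coe_fn_mk, Fin.insertNth_zero, Fin.cons_zero, Fin.cons_succ, cast_eq] at hint' ⊢
  rw [integral_prod _ hint']
  congr 1 with t
  rw [integral_fintype_prod_eq_pow (fun s ↦ t - s), integral_sub (integrable_const t) hν₁]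
  simp

theorem ProbabilityTheory.iIndepFun.integral_prod_sub_succ {Ω : Type*} {mΩ : MeasurableSpace Ω}
    {μ : Measure Ω} {k : ℕ} {X : Ω → ℝ} {W : Fin (k + 1) → Ω → ℝ} (hindep : iIndepFun W μ)
    (hk : 1 ≤ k) (hX : MemLp X k μ) (hid : ∀ j, IdentDistrib (W j) X μ μ) :
    ∫ ω, ∏ i : Fin k, (W 0 ω - W i.succ ω) ∂μ = ∫ ω, (X ω - ∫ a, X a ∂μ) ^ k ∂μ := by
  have := hindep.isProbabilityMeasure
  have hXm : AEMeasurable X μ := hX.aestronglyMeasurable.aemeasurable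
  have := Measure.isProbabilityMeasure_map (μ := μ) hXm
  have hlaw : μ.map (fun ω j ↦ W j ω) = Measure.pi fun _ ↦ μ.map X := by
    rw [hindep.map_fun_eq_pi_map fun j ↦ (hid j).aemeasurable_fst]
    simp_rw [(hid _).map_eq]
  have hν : MemLp id k (μ.map X) := (memLp_map_measure_iff aestronglyMeasurable_id hXm).2 hX
  calc ∫ ω, ∏ i : Fin k, (W 0 ω - W i.succ ω) ∂μ
      = ∫ x, ∏ i : Fin k, (x 0 - x i.succ) ∂μ.map (fun ω j ↦ W j ω) :=
        (integral_map (aemeasurable_pi_lambda _ fun j ↦ (hid j).aemeasurable_fst)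
          (f := fun x ↦ ∏ i : Fin k, (x 0 - x i.succ)) (by fun_prop)).symm
    _ = ∫ t, (t - ∫ s, s ∂μ.map X) ^ k ∂μ.map X := by
        rw [hlaw, integral_pi_prod_sub_succ _ hk hν]
    _ = ∫ ω, (X ω - ∫ a, X a ∂μ) ^ k ∂μ := by
        rw [integral_map hXm (by fun_prop), integral_map hXm (by fun_prop)]

theorem product_of_differences_unbiased_general
    {Ω : Type*} {mΩ : MeasurableSpace Ω} {μ : Measure Ω}
    (n : ℕ)
    (X : Ω → ℝ) (Y : Fin (n + 1) → Ω → ℝ) (μX : ℝ)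
    (hX : MemLp X n μ)
    (hμX : μX = ∫ a, X a ∂μ)
    (hindep : iIndepFun Y μ)
    (hid : ∀ i, IdentDistrib (Y i) X μ μ) :
    ∀ k, 1 ≤ k → k ≤ n →
      ∫ ω, ∏ i ∈ Finset.range k, (Y 0 ω - Y ((i + 1 : ℕ) : Fin (n + 1)) ω) ∂μ
        = ∫ ω, (X ω - μX) ^ k ∂μ := by
  intro k hk hkn
  have := hindep.isProbabilityMeasure
  have hkn' : k + 1 ≤ n + 1 := by omega
  have hreindex (ω : Ω) : ∏ i ∈ Finset.range k, (Y 0 ω - Y ((i + 1 : ℕ) : Fin (n + 1)) ω)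
      = ∏ i : Fin k, (Y (Fin.castLE hkn' 0) ω - Y (Fin.castLE hkn' i.succ) ω) := by
    rw [Finset.prod_range]
    congr! with i
    ext
    rw [Fin.val_natCast, Nat.mod_eq_of_lt (by omega)]
    simp
  simp_rw [hreindex, hμX]
  exact (hindep.precomp (Fin.castLE_injective hkn')).integral_prod_sub_succ hk
    (hX.mono_exponent (by exact_mod_cast hkn)) fun _ ↦ hid _

theorem product_of_differences_unbiased
    {Ω : Type*} {mΩ : MeasurableSpace Ω} {μ : Measure Ω} [IsProbabilityMeasure μ]
    (n : ℕ) (hn : 1 ≤ n)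
    (X : Ω → ℝ) (Y : Fin (n + 1) → Ω → ℝ) (μX : ℝ)
    (hX : MemLp X n μ)
    (hμX : μX = ∫ a, X a ∂μ)
    (hindep : iIndepFun Y μ)
    (hid : ∀ i, IdentDistrib (Y i) X μ μ) :
    ∀ k, 1 ≤ k → k ≤ n →
      ∫ ω, ∏ i ∈ Finset.range k, (Y 0 ω - Y ((i + 1 : ℕ) : Fin (n + 1)) ω) ∂μ
        = ∫ ω, (X ω - μX) ^ k ∂μ :=
  product_of_differences_unbiased_general (mΩ := mΩ) n X Y μX hX hμX hindep hid
end

section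
/- Let X be a real random variable with mean μ = E[X] and finite central moments μ_j := E[(X - μ)^j] for j = 1, ..., n+1, where n ≥ 1, and let X_1, X_2, X_3 be i.i.d. copies of X. Then μ_{n+1} = E[X (X - μ)^n] - μ μ_n = E[(X_1 - X_2)(X_1 - μ)^n] = E[(X_1 - X_3)(X_1 - X_2)^n] - ∑_{j=2}^{n-1} (-1)^j binom(n, j) μ_j μ_{n+1-j}. -/
/-!
Centre at `μ`: with `W = X - μ` and `Z_i = X_i - μ` we have `E[W] = 0`, the `Z_i` are
independent copies of `W`, and `X_1 - X_k = Z_1 - Z_k`. The first identity is the integral of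
`X (X - μ)^n = (X - μ)^(n+1) + μ (X - μ)^n`. In the other two the subtracted copy `Z_k` is centred
and independent of the remaining factor, so it drops out, leaving `E[Z_1^(n+1)] = μ_(n+1)` and
`E[Z_1 (Z_1 - Z_2)^n]` respectively. Expanding `(Z_1 - Z_2)^n` binomially and factorising by
independence turns the latter into `∑_{j=0}^n (-1)^j binom(n, j) μ_j μ_(n+1-j)`, whose `j = 0`
term is `μ_(n+1)` and whose `j = 1` and `j = n` terms vanish because `μ_1 = 0`.
-/

open MeasureTheory ProbabilityTheory Finset
open scoped ENNReal

lemma mul_sub_pow_eq_sum {R : Type*} [CommRing R] (x y : R) (n : ℕ) :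
    x * (x - y) ^ n
      = ∑ j ∈ range (n + 1), (-1) ^ j * (n.choose j : R) * (y ^ j * x ^ (n + 1 - j)) := by
  rw [sub_eq_neg_add, add_pow, mul_sum]
  refine sum_congr rfl fun j hj => ?_
  rw [Nat.sub_add_comm (Nat.le_of_lt_succ (mem_range.mp hj)), neg_pow, pow_succ]
  ring

lemma sum_range_choose_mul_mul_eq_add_sum_Icc {R : Type*} [CommRing R] (m : ℕ → R)
    (h0 : m 0 = 1) (h1 : m 1 = 0) (n : ℕ) :
    ∑ j ∈ range (n + 1), (-1) ^ j * (n.choose j : R) * m j * m (n + 1 - j)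
      = m (n + 1) + ∑ j ∈ Icc 2 (n - 1), (-1) ^ j * (n.choose j : R) * m j * m (n + 1 - j) := by
  have hsub : insert 0 (Icc 2 (n - 1)) ⊆ range (n + 1) := by
    intro j
    simp only [mem_insert, mem_Icc, mem_range]
    omega
  rw [← sum_subset hsub, sum_insert (by simp)]
  · simp [h0]
  · intro j hj hj'
    simp only [mem_insert, mem_Icc, mem_range, not_or, not_and_or, not_le] at hj hj'
    obtain rfl | rfl : j = 1 ∨ j = n := by omega
    · simp [h1]
    · simp [h1]

section
variable {Ω : Type*} {mΩ : MeasurableSpace Ω} {μ : Measure Ω}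

lemma MeasureTheory.MemLp.integrable_pow_of_le [IsFiniteMeasure μ] {f : Ω → ℝ} {p : ℝ≥0∞}
    {m : ℕ} (hf : MemLp f p μ) (hm : (m : ℝ≥0∞) ≤ p) : Integrable (fun ω => f ω ^ m) μ := by
  have h := (hf.mono_exponent hm).integrable_norm_pow'
  exact (integrable_norm_iff (hf.aestronglyMeasurable.pow m)).mp (by simpa [norm_pow] using h)

lemma MeasureTheory.integral_mul_sub_const_pow [IsFiniteMeasure μ] {X : Ω → ℝ} {n : ℕ}
    (hX : MemLp X (n + 1) μ) (c : ℝ) :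
    ∫ ω, X ω * (X ω - c) ^ n ∂μ = ∫ ω, (X ω - c) ^ (n + 1) ∂μ + c * ∫ ω, (X ω - c) ^ n ∂μ := by
  have hXc : MemLp (fun ω => X ω - c) (n + 1) μ := hX.sub (memLp_const c)
  have hsplit (ω : Ω) : X ω * (X ω - c) ^ n = (X ω - c) ^ (n + 1) + c * (X ω - c) ^ n := by ring
  simp_rw [hsplit]
  rw [integral_add (hXc.integrable_pow_of_le (by norm_cast))
    ((hXc.integrable_pow_of_le (by norm_cast; omega)).const_mul c), integral_const_mul]

lemma ProbabilityTheory.IdentDistrib.integral_pow_eq {U W : Ω → ℝ}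
    (h : IdentDistrib U W μ μ) (j : ℕ) : ∫ ω, U ω ^ j ∂μ = ∫ ω, W ω ^ j ∂μ :=
  (h.comp (measurable_id.pow_const j)).integral_eq

lemma ProbabilityTheory.IndepFun.integral_pow_mul_pow {U V : Ω → ℝ} (hUV : IndepFun U V μ)
    (hU : AEMeasurable U μ) (hV : AEMeasurable V μ) (a b : ℕ) :
    ∫ ω, U ω ^ a * V ω ^ b ∂μ = (∫ ω, U ω ^ a ∂μ) * ∫ ω, V ω ^ b ∂μ :=
  hUV.integral_fun_comp_mul_comp (f := (· ^ a)) (g := (· ^ b)) hU hV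
    (continuous_pow a).aestronglyMeasurable (continuous_pow b).aestronglyMeasurable

lemma ProbabilityTheory.IndepFun.integrable_pow_mul_pow [IsFiniteMeasure μ] {U V : Ω → ℝ}
    (hUV : IndepFun U V μ) {p : ℝ≥0∞} {a b : ℕ} (hU : MemLp U p μ) (hV : MemLp V p μ)
    (ha : (a : ℝ≥0∞) ≤ p) (hb : (b : ℝ≥0∞) ≤ p) :
    Integrable (fun ω => U ω ^ a * V ω ^ b) μ :=
  (hUV.comp (measurable_id.pow_const a) (measurable_id.pow_const b)).integrable_mul
    (hU.integrable_pow_of_le ha) (hV.integrable_pow_of_le hb)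

lemma ProbabilityTheory.IndepFun.integral_sub_mul_eq_of_integral_eq_zero {U V T : Ω → ℝ}
    (hVT : IndepFun V T μ) (hV : Integrable V μ) (hV0 : ∫ ω, V ω ∂μ = 0) (hT : Integrable T μ)
    (hUT : Integrable (fun ω => U ω * T ω) μ) :
    ∫ ω, (U ω - V ω) * T ω ∂μ = ∫ ω, U ω * T ω ∂μ := by
  simp_rw [sub_mul]
  rw [integral_sub hUT (by exact hVT.integrable_mul hV hT),
    hVT.integral_fun_mul_eq_mul_integral hV.1 hT.1, hV0, zero_mul, sub_zero]

variable [IsFiniteMeasure μ] {W : Ω → ℝ} {n : ℕ}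

section TwoCopies
variable {U V : Ω → ℝ} (hUV : IndepFun U V μ) (hUW : IdentDistrib U W μ μ)
  (hVW : IdentDistrib V W μ μ) (hW : MemLp W (n + 1) μ)
include hUV hUW hVW hW

private lemma ProbabilityTheory.IndepFun.integrable_mul_sub_pow_summand (j : ℕ)
    (hj : j ∈ range (n + 1)) :
    Integrable (fun ω => (-1) ^ j * (n.choose j : ℝ) * (V ω ^ j * U ω ^ (n + 1 - j))) μ := by
  rw [mem_range] at hj
  exact (hUV.symm.integrable_pow_mul_pow (hVW.memLp_iff.mpr hW) (hUW.memLp_iff.mpr hW)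
    (by norm_cast; omega) (by norm_cast; omega)).const_mul _

lemma ProbabilityTheory.IndepFun.integrable_mul_sub_pow :
    Integrable (fun ω => U ω * (U ω - V ω) ^ n) μ := by
  simp_rw [mul_sub_pow_eq_sum]
  exact integrable_finsetSum _ (hUV.integrable_mul_sub_pow_summand hUW hVW hW)

lemma ProbabilityTheory.IndepFun.integral_mul_sub_pow :
    ∫ ω, U ω * (U ω - V ω) ^ n ∂μ = ∑ j ∈ range (n + 1),
      (-1) ^ j * (n.choose j : ℝ) * (∫ ω, W ω ^ j ∂μ) * ∫ ω, W ω ^ (n + 1 - j) ∂μ := by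
  simp_rw [mul_sub_pow_eq_sum]
  rw [integral_finsetSum _ (hUV.integrable_mul_sub_pow_summand hUW hVW hW)]
  refine sum_congr rfl fun j _ => ?_
  rw [integral_const_mul, hUV.symm.integral_pow_mul_pow hVW.aemeasurable_fst
    hUW.aemeasurable_fst, hUW.integral_pow_eq, hVW.integral_pow_eq]
  ring

lemma ProbabilityTheory.IndepFun.integral_sub_mul_pow (hW0 : ∫ ω, W ω ∂μ = 0) :
    ∫ ω, (U ω - V ω) * U ω ^ n ∂μ = ∫ ω, W ω ^ (n + 1) ∂μ := by
  have hU : MemLp U (n + 1) μ := hUW.memLp_iff.mpr hW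
  have hVU : IndepFun V (fun ω => U ω ^ n) μ :=
    hUV.symm.comp measurable_id (measurable_id.pow_const n)
  rw [hVU.integral_sub_mul_eq_of_integral_eq_zero
      (hVW.integrable_iff.mpr (hW.integrable le_add_self)) (hVW.integral_eq.trans hW0) (hU.integrable_pow_of_le (by norm_cast; omega))
      (by simpa only [← pow_succ'] using hU.integrable_pow_of_le (by norm_cast))]
  simp_rw [← pow_succ', hUW.integral_pow_eq]

end TwoCopies

lemma ProbabilityTheory.iIndepFun.integral_sub_mul_sub_pow {ι : Type*} {Z : ι → Ω → ℝ}
    (hZ : iIndepFun Z μ) (hZW : ∀ i, IdentDistrib (Z i) W μ μ) (hW : MemLp W (n + 1) μ)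
    (hW0 : ∫ ω, W ω ∂μ = 0) {i j k : ι} (hij : i ≠ j) (hik : i ≠ k) (hjk : j ≠ k) :
    ∫ ω, (Z i ω - Z k ω) * (Z i ω - Z j ω) ^ n ∂μ = ∑ l ∈ range (n + 1),
      (-1) ^ l * (n.choose l : ℝ) * (∫ ω, W ω ^ l ∂μ) * ∫ ω, W ω ^ (n + 1 - l) ∂μ := by
  have hZint (l : ι) : Integrable (Z l) μ := (hZW l).integrable_iff.mpr (hW.integrable le_add_self)
  have hkij : IndepFun (Z k) (fun ω => (Z i ω - Z j ω) ^ n) μ :=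
    (hZ.indepFun_prodMk₀ (fun l => (hZint l).aemeasurable) i j k hik hjk).symm.comp
      measurable_id (by fun_prop : Measurable fun p : ℝ × ℝ => (p.1 - p.2) ^ n)
  have hij' := hZ.indepFun hij
  rw [hkij.integral_sub_mul_eq_of_integral_eq_zero (hZint k) ((hZW k).integral_eq.trans hW0)
      ((((hZW i).memLp_iff.mpr hW).sub ((hZW j).memLp_iff.mpr hW)).integrable_pow_of_le
        (by norm_cast; omega))
      (hij'.integrable_mul_sub_pow (hZW i) (hZW j) hW),
    hij'.integral_mul_sub_pow (hZW i) (hZW j) hW]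

end

theorem central_moment_recursion_general
    {Ω : Type*} {mΩ : MeasurableSpace Ω} {μ : Measure Ω} [IsProbabilityMeasure μ]
    (n : ℕ)
    (X : Ω → ℝ) (Y : Fin 3 → Ω → ℝ) (μX : ℝ) (mom : ℕ → ℝ)
    (hX : MemLp X (n + 1) μ)
    (hμX : μX = ∫ a, X a ∂μ)
    (hmom : ∀ j, mom j = ∫ ω, (X ω - μX) ^ j ∂μ)
    (hindep : iIndepFun Y μ)
    (hid : ∀ i, IdentDistrib (Y i) X μ μ) :
    (mom (n + 1) = (∫ ω, X ω * (X ω - μX) ^ n ∂μ) - μX * mom n)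
    ∧ (mom (n + 1) = ∫ ω, (Y 0 ω - Y 1 ω) * (Y 0 ω - μX) ^ n ∂μ)
    ∧ (mom (n + 1)
        = (∫ ω, (Y 0 ω - Y 2 ω) * (Y 0 ω - Y 1 ω) ^ n ∂μ)
          - ∑ j ∈ Finset.Icc 2 (n - 1),
              (-1 : ℝ) ^ j * (n.choose j : ℝ) * mom j * mom (n + 1 - j)) := by
  set W : Ω → ℝ := fun ω => X ω - μX
  set Z : Fin 3 → Ω → ℝ := fun i ω => Y i ω - μX
  have hW : MemLp W (n + 1) μ := hX.sub (memLp_const μX)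
  have hW0 : ∫ ω, W ω ∂μ = 0 := by
    simp [W, integral_sub (hX.integrable le_add_self) (integrable_const μX), ← hμX]
  have hmomW (j : ℕ) : mom j = ∫ ω, W ω ^ j ∂μ := hmom j
  have hmom0 : mom 0 = 1 := by simp [hmomW]
  have hmom1 : mom 1 = 0 := by simpa [hmomW] using hW0
  have hZW (i : Fin 3) : IdentDistrib (Z i) W μ μ := (hid i).comp (measurable_sub_const μX)
  have hZ : iIndepFun Z μ := hindep.comp _ fun _ => measurable_sub_const μX
  have hYZ (i j : Fin 3) (ω : Ω) : Y i ω - Y j ω = Z i ω - Z j ω :=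
    (sub_sub_sub_cancel_right _ _ μX).symm
  refine ⟨?_, ?_, ?_⟩
  · rw [integral_mul_sub_const_pow hX, hmom, hmom]
    ring
  · rw [hmomW, ← (hZ.indepFun (by decide)).integral_sub_mul_pow (hZW 0) (hZW 1) hW hW0]
    simp_rw [hYZ]
    rfl
  · rw [eq_sub_iff_add_eq, ← sum_range_choose_mul_mul_eq_add_sum_Icc mom hmom0 hmom1]
    simp_rw [hYZ, hZ.integral_sub_mul_sub_pow hZW hW hW0 (i := 0) (j := 1) (k := 2)
      (by decide) (by decide) (by decide), hmomW]

theorem central_moment_recursion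
    {Ω : Type*} {mΩ : MeasurableSpace Ω} {μ : Measure Ω} [IsProbabilityMeasure μ]
    (n : ℕ) (hn : 1 ≤ n)
    (X : Ω → ℝ) (Y : Fin 3 → Ω → ℝ) (μX : ℝ) (mom : ℕ → ℝ)
    (hX : MemLp X (n + 1) μ)
    (hμX : μX = ∫ a, X a ∂μ)
    (hmom : ∀ j, mom j = ∫ ω, (X ω - μX) ^ j ∂μ)
    (hindep : iIndepFun Y μ)
    (hid : ∀ i, IdentDistrib (Y i) X μ μ) :
    (mom (n + 1) = (∫ ω, X ω * (X ω - μX) ^ n ∂μ) - μX * mom n)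
    ∧ (mom (n + 1) = ∫ ω, (Y 0 ω - Y 1 ω) * (Y 0 ω - μX) ^ n ∂μ)
    ∧ (mom (n + 1)
        = (∫ ω, (Y 0 ω - Y 2 ω) * (Y 0 ω - Y 1 ω) ^ n ∂μ)
          - ∑ j ∈ Finset.Icc 2 (n - 1),
              (-1 : ℝ) ^ j * (n.choose j : ℝ) * mom j * mom (n + 1 - j)) :=
  central_moment_recursion_general (mΩ := mΩ) n X Y μX mom hX hμX hmom hindep hid
end

section
/- Let X be a real random variable with mean μ = E[X] and finite central moments μ_j := E[(X - μ)^j] for j = 1, ..., n+1, where n ≥ 1 and n+1 is even, and let X_1, X_2 be i.i.d. copies of X. Then μ_{n+1} = (1/2)[E[(X_1 - X_2)^{n+1}] - ∑_{j=2}^{n-1} (-1)^j binom(n+1, j) μ_j μ_{n+1-j}]. -/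
/-!
Center everything at the mean: with `Y = X - E X` and `Yᵢ = Xᵢ - E X`, we have
`X₁ - X₂ = Y₁ - Y₂`, and expanding `(Y₁ - Y₂)^(n+1)` binomially, independence turns the
expectation of each term into `μ_j μ_{n+1-j}`. Since `n + 1` is even, the two extreme terms
both equal `μ_{n+1}` (as `μ_0 = 1`), and the terms `j = 1` and `j = n` vanish (as `μ_1 = 0`).
-/

open MeasureTheory ProbabilityTheory Finset

lemma Finset.sum_range_add_two_eq_add_sum_Icc_of_eq_zero {M : Type*} [AddCommMonoid M] {n : ℕ}
    (hn : 1 ≤ n) {f : ℕ → M} (hf1 : f 1 = 0) (hfn : f n = 0) :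
    ∑ m ∈ range (n + 2), f m = f 0 + f (n + 1) + ∑ j ∈ Icc 2 (n - 1), f j := by
  have hsplit : range (n + 2) \ {1, n} = insert 0 (insert (n + 1) (Icc 2 (n - 1))) := by
    ext x
    simp only [mem_sdiff, mem_range, mem_insert, mem_Icc, mem_singleton]
    omega
  rw [← sum_subset sdiff_subset fun x hx hx' => ?_, hsplit, sum_insert, sum_insert, add_assoc]
  · simp only [mem_Icc]; omega
  · simp only [mem_insert, mem_Icc]; omega
  · obtain rfl | rfl : x = 1 ∨ x = n := by
      simp only [mem_sdiff, hx, mem_insert, mem_singleton] at hx'; tauto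
    exacts [hf1, hfn]

namespace ProbabilityTheory

variable {Ω : Type*} {mΩ : MeasurableSpace Ω} {μ : Measure Ω}
  {Y Y₁ Y₂ : Ω → ℝ} {N : ℕ}

lemma _root_.MeasureTheory.MemLp.integrable_pow_of_le_s17 [IsFiniteMeasure μ] {j : ℕ}
    (hY : MemLp Y N μ) (hj : j ≤ N) : Integrable (Y ^ j) μ := by
  have hYj : MemLp Y j μ := hY.mono_exponent (by exact_mod_cast hj)
  refine hYj.integrable_norm_pow'.mono' (hYj.aestronglyMeasurable.pow j) ?_
  filter_upwards with ω using by simp [norm_pow]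

lemma IndepFun.integral_pow_mul_pow_s17 (hindep : IndepFun Y₁ Y₂ μ)
    (hid1 : IdentDistrib Y₁ Y μ μ) (hid2 : IdentDistrib Y₂ Y μ μ) (j k : ℕ) :
    μ[Y₁ ^ j * Y₂ ^ k] = moment Y j μ * moment Y k μ := by
  have hid1' : IdentDistrib (Y₁ ^ j) (Y ^ j) μ μ := hid1.comp (measurable_id.pow_const j)
  have hid2' : IdentDistrib (Y₂ ^ k) (Y ^ k) μ μ := hid2.comp (measurable_id.pow_const k)
  have hindep' : IndepFun (Y₁ ^ j) (Y₂ ^ k) μ :=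
    hindep.comp (measurable_id.pow_const j) (measurable_id.pow_const k)
  rw [hindep'.integral_mul_eq_mul_integral hid1'.aestronglyMeasurable_fst
    hid2'.aestronglyMeasurable_fst, hid1'.integral_eq, hid2'.integral_eq, moment, moment]

lemma IndepFun.integral_sub_pow [IsFiniteMeasure μ] (hindep : IndepFun Y₁ Y₂ μ)
    (hid1 : IdentDistrib Y₁ Y μ μ) (hid2 : IdentDistrib Y₂ Y μ μ) (hY : MemLp Y N μ) :
    μ[(Y₁ - Y₂) ^ N] = ∑ m ∈ range (N + 1),
      (-1) ^ (m + N) * (N.choose m : ℝ) * (moment Y m μ * moment Y (N - m) μ) := by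
  have hint (m : ℕ) (hm : m ∈ range (N + 1)) : Integrable (Y₁ ^ m * Y₂ ^ (N - m)) μ :=
    (hindep.comp (measurable_id.pow_const m) (measurable_id.pow_const (N - m))).integrable_mul
      ((hid1.memLp_iff.2 hY).integrable_pow_of_le_s17 (by grind))
      ((hid2.memLp_iff.2 hY).integrable_pow_of_le_s17 (Nat.sub_le N m))
  calc μ[(Y₁ - Y₂) ^ N]
      = ∫ ω, ∑ m ∈ range (N + 1),
          (-1) ^ (m + N) * (N.choose m : ℝ) * (Y₁ ^ m * Y₂ ^ (N - m)) ω ∂μ := by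
        congr with ω
        simp only [Pi.pow_apply, Pi.sub_apply, Pi.mul_apply, sub_pow]
        ring_nf
    _ = _ := by
        rw [integral_finsetSum _ fun m hm => (hint m hm).const_mul _]
        refine sum_congr rfl fun m _ => ?_
        rw [integral_const_mul, hindep.integral_pow_mul_pow_s17 hid1 hid2]

end ProbabilityTheory

theorem central_moment_recursion_even
    {Ω : Type*} {mΩ : MeasurableSpace Ω} {μ : Measure Ω} [IsProbabilityMeasure μ]
    (n : ℕ) (hn : 1 ≤ n) (heven : Even (n + 1))
    (X X₁ X₂ : Ω → ℝ) (μX : ℝ) (mom : ℕ → ℝ)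
    (hX : MemLp X (n + 1) μ)
    (hμX : μX = ∫ a, X a ∂μ)
    (hmom : ∀ j, mom j = ∫ ω, (X ω - μX) ^ j ∂μ)
    (hindep : IndepFun X₁ X₂ μ)
    (hid1 : IdentDistrib X₁ X μ μ) (hid2 : IdentDistrib X₂ X μ μ) :
    mom (n + 1)
      = (1 / 2) * ((∫ ω, (X₁ ω - X₂ ω) ^ (n + 1) ∂μ)
          - ∑ j ∈ Finset.Icc 2 (n - 1),
              (-1 : ℝ) ^ j * ((n + 1).choose j : ℝ) * mom j * mom (n + 1 - j)) := by
  subst hμX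
  set c := μ[X]
  have hmomY : mom = fun j => moment (X - fun _ => c) j μ := funext hmom
  have hcenter : Measurable fun x : ℝ => x - c := measurable_id.sub_const c
  have hexpand := IndepFun.integral_sub_pow (N := n + 1) (Y := X - fun _ => c)
    (Y₁ := X₁ - fun _ => c) (Y₂ := X₂ - fun _ => c) (hindep.comp hcenter hcenter)
    (hid1.comp hcenter) (hid2.comp hcenter) (by exact_mod_cast hX.sub (memLp_const c))
  have hdiff : (fun ω => (X₁ ω - X₂ ω) ^ (n + 1))
      = ((X₁ - fun _ => c) - (X₂ - fun _ => c)) ^ (n + 1) := by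
    ext ω; simp
  have h0 : moment (X - fun _ => c) 0 μ = 1 := by simp [moment]
  have h1 : moment (X - fun _ => c) 1 μ = 0 := centralMoment_one
  rw [hdiff, hexpand, sum_range_add_two_eq_add_sum_Icc_of_eq_zero hn (by simp [h1])
    (by simp [h1]), hmomY]
  simp only [pow_add, heven.neg_one_pow, pow_zero, Nat.choose_zero_right, Nat.choose_self,
    Nat.sub_zero, Nat.sub_self, Nat.cast_one, h0, mul_one, one_mul, mul_assoc]
  ring
end
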